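/- arXiv:0907.3254 — 2 statements merged into one kernel-verified Lean document; each statement's English description precedes it below -/
import Mathlib

section
/- Let k ≥ 0 and l ≥ 0. For each i with 1 ≤ i ≤ k+1, the number of paths q in 𝒬(k,l,1) with q_1 = +1 such that exactly i up steps of q start on or below the x-axis equals (1/(k+1))·C(2k+l,2k)·C(2k,k). -/
open Finset

/-- The sum of the first `m` entries of a sequence `p` of length `N` (the height `s_m`). -/
def psum {N : ℕ} (p : Fin N → ℤ) (m : ℕ) : ℤ :=
  ∑ j ∈ Finset.univ.filter (fun j : Fin N => (j : ℕ) < m), p j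

/-!
Cyclic lemma. Let `q` be a sequence of `N` steps with total sum `1`, and order its positions by
the height before them, ties broken in favour of later positions. A step of the rotation of `q`
starting at position `m` starts on or below the axis exactly when its position comes no later
than `m` in this order. Hence if `m` is the `i`-th up step in this order, the rotation starting at
`m` begins with an up step and has exactly `i` up steps starting on or below the axis. So each of
the `C(N, k+1) C(k+l, k)` sequences with `k+1` up and `k` down steps has exactly one such rotation
for every `i`, and counting pairs (sequence, rotation) gives `N` times the desired number as
`C(N, k+1) C(k+l, k) = N C(2k+l, 2k) C(2k, k) / (k+1)`, where `N = 2k+l+1`.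
-/

namespace ChungFeller

open Fin.NatCast

variable {N : ℕ}

def rotate [NeZero N] {α : Type*} (m : Fin N) (q : Fin N → α) : Fin N → α :=
  fun j => q (m + j)

section Rotation

variable [NeZero N] {α : Type*}

@[simp]
lemma rotate_neg_rotate (m : Fin N) (q : Fin N → α) : rotate (-m) (rotate m q) = q := by
  ext j; simp [rotate]

@[simp]
lemma rotate_rotate_neg (m : Fin N) (q : Fin N → α) : rotate m (rotate (-m) q) = q := by
  ext j; simp [rotate]

lemma card_filter_rotate (m : Fin N) (q : Fin N → α) (P : α → Prop) [DecidablePred P] :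
    #{j | P (rotate m q j)} = #{j | P (q j)} := by
  refine card_nbij' (m + ·) (-m + ·) ?_ ?_ ?_ ?_ <;> intro j <;>
    simp only [mem_coe, mem_filter, mem_univ, true_and] <;> simp [rotate]

lemma sum_card_filter_rotate (S : Finset (Fin N → α)) (hS : ∀ m, ∀ q ∈ S, rotate m q ∈ S)
    (P : (Fin N → α) → Prop) [DecidablePred P] :
    ∑ q ∈ S, #{m | P (rotate m q)} = #{q ∈ S | P q} * N := by
  calc ∑ q ∈ S, #{m | P (rotate m q)}
      = ∑ m, #{q ∈ S | P (rotate m q)} :=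
        sum_card_bipartiteAbove_eq_sum_card_bipartiteBelow (fun q m => P (rotate m q))
    _ = ∑ _m : Fin N, #{q ∈ S | P q} := by
        refine sum_congr rfl fun m _ => card_nbij' (rotate m) (rotate (-m)) ?_ ?_ ?_ ?_
        · intro q hq
          simp only [coe_filter, Set.mem_ofPred_eq] at hq ⊢
          exact ⟨hS m q hq.1, hq.2⟩
        · intro q hq
          simp only [coe_filter, Set.mem_ofPred_eq] at hq ⊢
          exact ⟨hS (-m) q hq.1, by simpa using hq.2⟩
        · intro q _; simp
        · intro q _; simp
    _ = #{q ∈ S | P q} * N := by simp [mul_comm]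

end Rotation

lemma card_filter_card_le_eq_one {α β : Type*} [LinearOrder β] {U : Finset α} {f : α → β}
    (hf : Set.InjOn f U) {i : ℕ} (hi1 : 1 ≤ i) (hi2 : i ≤ #U) :
    #{m ∈ U | #{p ∈ U | f p ≤ f m} = i} = 1 := by
  set rank : α → ℕ := fun m => #{p ∈ U | f p ≤ f m}
  have rank_lt : ∀ a ∈ U, ∀ b ∈ U, f a < f b → rank a < rank b := by
    intro a _ b hb hab
    refine card_lt_card ((ssubset_iff_of_subset fun p hp => ?_).2 ⟨b, ?_, ?_⟩)
    · simp only [mem_filter] at hp ⊢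
      exact ⟨hp.1, hp.2.trans hab.le⟩
    · simp [hb]
    · simp [hab]
  have rank_injOn : Set.InjOn rank U := by
    intro a ha b hb hab
    by_contra hne
    rcases (hf.ne ha hb hne).lt_or_gt with h | h
    · exact (rank_lt a ha b hb h).ne hab
    · exact (rank_lt b hb a ha h).ne hab.symm
  have image_rank : U.image rank = Icc 1 #U := by
    refine eq_of_subset_of_card_le (fun r hr => ?_) ?_
    · obtain ⟨m, hm, rfl⟩ := mem_image.1 hr
      exact mem_Icc.2 ⟨card_pos.2 ⟨m, by simp [hm]⟩, card_le_card (filter_subset _ _)⟩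
    · rw [card_image_of_injOn rank_injOn, Nat.card_Icc, Nat.add_sub_cancel]
  obtain ⟨m, hm, rfl⟩ := mem_image.1 (image_rank ▸ mem_Icc.2 ⟨hi1, hi2⟩)
  refine card_eq_one.2 ⟨m, ext fun a => ?_⟩
  simp only [mem_filter, mem_singleton]
  exact ⟨fun ⟨ha, h⟩ => rank_injOn ha hm h, by rintro rfl; exact ⟨hm, rfl⟩⟩

section Heights

variable [NeZero N]

/-- Heights of the `N`-periodic extension of `q`: the cast `(j : Fin N)` reduces `j` modulo `N`. -/
def height (q : Fin N → ℤ) (t : ℕ) : ℤ :=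
  ∑ j ∈ range t, q (j : Fin N)

lemma psum_eq_height (q : Fin N → ℤ) {t : ℕ} (ht : t ≤ N) : psum q t = height q t := by
  refine sum_nbij' (fun j => j.val) (fun j => (j : Fin N)) ?_ ?_ ?_ ?_ ?_
  · intro j hj; simpa using hj
  · intro j hj
    replace hj : j < t := by simpa using hj
    simp [Fin.val_natCast, Nat.mod_eq_of_lt (hj.trans_le ht), hj]
  · intro j _; simp
  · intro j hj
    replace hj : j < t := by simpa using hj
    simp [Fin.val_natCast, Nat.mod_eq_of_lt (hj.trans_le ht)]
  · intro j _; simp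

lemma sum_eq_height (q : Fin N → ℤ) : ∑ j, q j = height q N := by
  simp_rw [height, ← Fin.sum_univ_eq_sum_range, Fin.cast_val_eq_self]

lemma height_add_self (q : Fin N → ℤ) (t : ℕ) : height q (N + t) = height q N + height q t := by
  simp [height, sum_range_add]

lemma psum_rotate (q : Fin N → ℤ) (m : Fin N) {t : ℕ} (ht : t ≤ N) :
    psum (rotate m q) t = height q (m + t) - height q m := by
  rw [psum_eq_height _ ht, height, height, height, sum_range_add, add_sub_cancel_left]
  refine sum_congr rfl fun j _ => ?_
  simp [rotate]

end Heights

def upStepsOnOrBelowAxis (q : Fin N → ℤ) : Finset (Fin N) :=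
  {m | q m = 1 ∧ psum q m ≤ 0}

def key (q : Fin N → ℤ) (p : Fin N) : ℤ ×ₗ (Fin N)ᵒᵈ :=
  toLex (psum q p, OrderDual.toDual p)

lemma key_injective (q : Fin N → ℤ) : Function.Injective (key q) := fun _ _ h =>
  OrderDual.toDual.injective (congrArg (fun x => (ofLex x).2) h)

section CyclicLemma

variable [NeZero N] {q : Fin N → ℤ}

lemma psum_rotate_nonpos_iff (hq : ∑ j, q j = 1) (m j : Fin N) :
    psum (rotate m q) j ≤ 0 ↔ key q (m + j) ≤ key q m := by
  have hmj := Fin.val_add_eq_ite m j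
  rw [psum_rotate q m j.isLt.le, key, key, Prod.Lex.toLex_le_toLex, OrderDual.toDual_le_toDual,
    Fin.le_def, psum_eq_height q m.isLt.le, psum_eq_height q (m + j).isLt.le]
  split_ifs at hmj with hwrap
  · rw [show (m : ℕ) + j = N + (m + j : Fin N) by omega, height_add_self, ← sum_eq_height, hq]
    constructor
    · intro h; left; omega
    · rintro (h | ⟨-, h⟩) <;> omega
  · rw [hmj]
    constructor
    · intro h; omega
    · rintro (h | ⟨h, -⟩) <;> omega

lemma card_upStepsOnOrBelowAxis_rotate (hq : ∑ j, q j = 1) (m : Fin N) :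
    #(upStepsOnOrBelowAxis (rotate m q)) = #{p | q p = 1 ∧ key q p ≤ key q m} := by
  refine card_nbij' (m + ·) (· - m) ?_ ?_ ?_ ?_
  · intro j hj
    simp only [upStepsOnOrBelowAxis, coe_filter, mem_univ, true_and, Set.mem_ofPred_eq] at hj ⊢
    exact ⟨hj.1, (psum_rotate_nonpos_iff hq m j).1 hj.2⟩
  · intro p hp
    simp only [upStepsOnOrBelowAxis, coe_filter, mem_univ, true_and, Set.mem_ofPred_eq] at hp ⊢
    refine ⟨by simpa [rotate] using hp.1, (psum_rotate_nonpos_iff hq m _).2 ?_⟩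
    simpa using hp.2
  · intro j _; simp
  · intro p _; simp

lemma card_filter_rotate_eq_one (hq : ∑ j, q j = 1) {i : ℕ} (hi1 : 1 ≤ i)
    (hi2 : i ≤ #{m | q m = 1}) :
    #{m | rotate m q 0 = 1 ∧ #(upStepsOnOrBelowAxis (rotate m q)) = i} = 1 := by
  simp_rw [card_upStepsOnOrBelowAxis_rotate hq, ← filter_filter]
  simpa [rotate] using card_filter_card_le_eq_one (key_injective q).injOn hi1 hi2

end CyclicLemma

section Words

def words (N a b : ℕ) : Finset (Fin N → ℤ) :=
  {q ∈ Fintype.piFinset fun _ => {1, 0, -1} | #{m | q m = 1} = a ∧ #{m | q m = -1} = b}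

lemma mem_words {a b : ℕ} {q : Fin N → ℤ} :
    q ∈ words N a b ↔
      (∀ m, q m = 1 ∨ q m = 0 ∨ q m = -1) ∧ #{m | q m = 1} = a ∧ #{m | q m = -1} = b := by
  simp [words]

lemma sum_eq_of_mem_words {a b : ℕ} {q : Fin N → ℤ} (hq : q ∈ words N a b) :
    ∑ j, q j = a - b := by
  obtain ⟨hval, hup, hdown⟩ := mem_words.1 hq
  have hsplit : ∀ j, q j = (if q j = 1 then 1 else 0) - (if q j = -1 then 1 else 0) := by
    intro j
    rcases hval j with h | h | h <;> simp [h]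
  rw [sum_congr rfl fun j _ => hsplit j, sum_sub_distrib, sum_boole, sum_boole, hup, hdown]

lemma rotate_mem_words [NeZero N] {a b : ℕ} (m : Fin N) {q : Fin N → ℤ}
    (hq : q ∈ words N a b) : rotate m q ∈ words N a b := by
  obtain ⟨hval, hup, hdown⟩ := mem_words.1 hq
  exact mem_words.2 ⟨fun j => hval (m + j), (card_filter_rotate m q (· = 1)).trans hup,
    (card_filter_rotate m q (· = -1)).trans hdown⟩

def signedIndicator (U D : Finset (Fin N)) (j : Fin N) : ℤ :=
  if j ∈ U then 1 else if j ∈ D then -1 else 0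

lemma filter_signedIndicator_eq_one (U D : Finset (Fin N)) :
    univ.filter (signedIndicator U D · = 1) = U := by
  ext j
  rw [mem_filter, signedIndicator]
  by_cases hU : j ∈ U <;> by_cases hD : j ∈ D <;> simp [hU, hD]

lemma filter_signedIndicator_eq_neg_one {U D : Finset (Fin N)} (h : Disjoint D U) :
    univ.filter (signedIndicator U D · = -1) = D := by
  ext j
  rw [mem_filter, signedIndicator]
  by_cases hU : j ∈ U
  · simp [hU, disjoint_right.1 h hU]
  · by_cases hD : j ∈ D <;> simp [hU, hD]

lemma card_words (a b : ℕ) : #(words N a b) = N.choose a * (N - a).choose b := by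
  calc #(words N a b)
      = #((univ.powersetCard a).sigma fun U : Finset (Fin N) => (univ \ U).powersetCard b) := by
        refine card_nbij'
          (fun q => (⟨univ.filter (q · = 1), univ.filter (q · = -1)⟩ :
            Σ _ : Finset (Fin N), Finset (Fin N)))
          (fun UD => signedIndicator UD.1 UD.2) ?_ ?_ ?_ ?_
        · intro q hq
          obtain ⟨-, hup, hdown⟩ := mem_words.1 (mem_coe.1 hq)
          simp only [coe_sigma, Set.mem_sigma_iff, mem_coe, mem_powersetCard]
          refine ⟨⟨subset_univ _, hup⟩, fun m hm => ?_, hdown⟩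
          simp_all
        · rintro ⟨U, D⟩ hUD
          simp only [coe_sigma, Set.mem_sigma_iff, mem_coe, mem_powersetCard, subset_sdiff] at hUD
          obtain ⟨⟨-, hU⟩, ⟨-, hDU⟩, hD⟩ := hUD
          refine mem_words.2 ⟨fun j => ?_, ?_, ?_⟩ <;> dsimp only
          · unfold signedIndicator
            split_ifs <;> simp
          · rw [filter_signedIndicator_eq_one, hU]
          · rw [filter_signedIndicator_eq_neg_one hDU, hD]
        · intro q hq
          obtain ⟨hval, -, -⟩ := mem_words.1 (mem_coe.1 hq)
          funext j
          dsimp only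
          rcases hval j with h | h | h <;> simp [signedIndicator, h]
        · rintro ⟨U, D⟩ hUD
          simp only [coe_sigma, Set.mem_sigma_iff, mem_coe, mem_powersetCard, subset_sdiff] at hUD
          dsimp only
          rw [filter_signedIndicator_eq_one, filter_signedIndicator_eq_neg_one hUD.2.1.2]
    _ = N.choose a * (N - a).choose b := by
        rw [card_sigma, sum_const_nat fun U hU => ?_, card_powersetCard, card_univ,
          Fintype.card_fin]
        rw [mem_powersetCard] at hU
        rw [card_powersetCard, card_sdiff_of_subset hU.1, hU.2, card_univ, Fintype.card_fin]

lemma card_filter_words_mul [NeZero N] {b i : ℕ} (hi1 : 1 ≤ i) (hi2 : i ≤ b + 1) :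
    #{q ∈ words N (b + 1) b | q 0 = 1 ∧ #(upStepsOnOrBelowAxis q) = i} * N =
      #(words N (b + 1) b) := by
  rw [← sum_card_filter_rotate _ (fun m _ => rotate_mem_words m), card_eq_sum_ones]
  refine sum_congr rfl fun q hq => card_filter_rotate_eq_one ?_ hi1 ?_
  · rw [sum_eq_of_mem_words hq]; push_cast; ring
  · rwa [(mem_words.1 hq).2.1]

end Words

lemma choose_mul_choose_mul_succ (k l : ℕ) :
    (2 * k + l + 1).choose (k + 1) * (k + l).choose k * (k + 1) =
      (2 * k + l + 1) * ((2 * k + l).choose (2 * k) * (2 * k).choose k) := by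
  have h := Nat.choose_mul (n := 2 * k + l) (k := 2 * k) (s := k) (by omega)
  rw [show 2 * k + l - k = k + l by omega, show 2 * k - k = k by omega] at h
  rw [h, mul_right_comm, ← Nat.add_one_mul_choose_eq]
  ring

end ChungFeller

open ChungFeller

/-- Among paths in 𝒬(k,l,1) (steps +1, 0, −1 with k+1 up steps, k down steps and
l flat steps) starting with an up step, for each `1 ≤ i ≤ k+1` the number with
exactly `i` up steps starting on or below the x-axis is `(1/(k+1))·C(2k+l,2k)·C(2k,k)`. -/
theorem motzkin_schroeder_chung_feller_up (k l : ℕ) (i : ℕ) (hi1 : 1 ≤ i) (hi2 : i ≤ k + 1) :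
    Nat.card {q : Fin (2*k+l+1) → ℤ //
      (∀ m, q m = 1 ∨ q m = 0 ∨ q m = -1) ∧
      (univ.filter (fun m => q m = 1)).card = k + 1 ∧
      (univ.filter (fun m => q m = -1)).card = k ∧
      q ⟨0, Nat.succ_pos _⟩ = 1 ∧
      (univ.filter (fun m : Fin (2*k+l+1) => q m = 1 ∧ psum q (m : ℕ) ≤ 0)).card = i }
      * (k + 1) = Nat.choose (2*k+l) (2*k) * Nat.choose (2*k) k := by
  rw [Nat.card_congr (Equiv.subtypeEquivRight (q := (· ∈
      {q ∈ words (2*k+l+1) (k + 1) k | q 0 = 1 ∧ #(upStepsOnOrBelowAxis q) = i})) fun q => ?_),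
    Nat.card_eq_finsetCard]
  · have hwords : #(words (2*k+l+1) (k + 1) k) = (2*k+l+1).choose (k + 1) * (k + l).choose k := by
      rw [card_words, show 2*k+l+1 - (k + 1) = k + l by omega]
    apply Nat.eq_of_mul_eq_mul_left (show 0 < 2*k+l+1 by omega)
    rw [← choose_mul_choose_mul_succ, ← hwords, ← card_filter_words_mul hi1 hi2]
    ring
  · rw [mem_filter, mem_words, upStepsOnOrBelowAxis, Fin.mk_zero]
    simp only [and_assoc]
end

section
/- Let r ≥ 1 and n ≥ 1. For each k with 0 ≤ k ≤ rn, the number of paths p in 𝒫(n,r,0) with exactly k up steps starting strictly below the x-axis equals (1/(rn+1))·C((r+1)n, n); in particular this count is independent of k. -/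
/-!
Cycle lemma. Prepending an up step turns a path of 𝒫(n,r,0) into a sequence of `(r+1)n+1` steps
with sum `1`, and its up steps starting below the axis into the other up steps `i` such that the
walk from the prepended step to `i` ends at or below its start. For any up step `t` of a cyclic
sequence with sum `1`, this count (`cycRank`) is invariant under rotation and equals the number of
up steps preceding `t` when positions are ordered by (height, −position); so each of the values
`0, …, rn` is the rank of exactly one up step. Counting pairs (sequence, up step of rank `k`) in
two ways, the `C((r+1)n+1, rn+1)` sequences are `(r+1)n+1` times as many as the paths with `k`
up steps below the axis.
-/

open Finset

open Fin.NatCast Fin.CommRing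

theorem Finset.existsUnique_card_filter_lt_eq {α β : Type*} [LinearOrder β] {s : Finset α}
    {f : α → β} (hf : Set.InjOn f s) {k : ℕ} (hk : k < #s) :
    ∃! t ∈ s, #{i ∈ s | f i < f t} = k := by
  set rank : α → ℕ := fun t => #{i ∈ s | f i < f t}
  have rank_strictMono {a b : α} (ha : a ∈ s) (hab : f a < f b) : rank a < rank b := by
    refine card_lt_card ⟨fun i hi => ?_, fun hsub => ?_⟩
    · simp only [mem_filter] at hi ⊢
      exact ⟨hi.1, hi.2.trans hab⟩
    · simpa using hsub (mem_filter.2 ⟨ha, hab⟩)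
  have rank_injOn : Set.InjOn rank s := by
    intro a ha b hb hab
    by_contra hne
    rcases lt_or_gt_of_ne (hf.ne ha hb hne) with h | h
    · exact (rank_strictMono ha h).ne hab
    · exact (rank_strictMono hb h).ne' hab
  have rank_mapsTo : Set.MapsTo rank s (range #s) := fun t ht =>
    mem_range.2 <| card_lt_card ⟨filter_subset _ _, fun hsub => by simpa using hsub ht⟩
  obtain ⟨t, ht, rfl⟩ :=
    surjOn_of_injOn_of_card_le rank rank_mapsTo rank_injOn (by simp) (mem_range.2 hk)
  exact ⟨t, ⟨ht, rfl⟩, fun t' ht' => rank_injOn ht'.1 ht ht'.2⟩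

section CyclicSequences

variable {M : ℕ}

def upSteps (q : Fin M → ℤ) : Finset (Fin M) := {i | q i = 1}

@[simp] lemma mem_upSteps {q : Fin M → ℤ} {i : Fin M} : i ∈ upSteps q ↔ q i = 1 := by
  simp only [upSteps, mem_filter_univ]

def rotate (c : Fin M) (q : Fin M → ℤ) : Fin M → ℤ := fun i => q (i + c)

lemma rotate_rotate (c d : Fin M) (q : Fin M → ℤ) : rotate c (rotate d q) = rotate (c + d) q :=
  funext fun i => by simp only [rotate, add_assoc]

@[simp] lemma mem_upSteps_rotate {c i : Fin M} {q : Fin M → ℤ} :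
    i ∈ upSteps (rotate c q) ↔ i + c ∈ upSteps q := by
  simp only [mem_upSteps, rotate]

def heightKey (q : Fin M → ℤ) (i : Fin M) : ℤ ×ₗ ℤ := toLex (psum q i, -(i : ℤ))

lemma heightKey_injective (q : Fin M → ℤ) : Function.Injective (heightKey q) := fun i j h => by
  have := congrArg (fun x => (ofLex x).2) h
  simp only [heightKey, ofLex_toLex, neg_inj, Nat.cast_inj] at this
  exact Fin.ext this

variable [NeZero M]

lemma rotate_zero (q : Fin M → ℤ) : rotate 0 q = q :=
  funext fun i => by simp only [rotate, add_zero]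

lemma card_upSteps_rotate (c : Fin M) (q : Fin M → ℤ) :
    #(upSteps (rotate c q)) = #(upSteps q) :=
  card_equiv (Equiv.addRight c) fun _ => mem_upSteps_rotate

variable (q : Fin M → ℤ)

lemma sum_range_eq_psum {m : ℕ} (hm : m ≤ M) : ∑ j ∈ range m, q j = psum q m := by
  calc ∑ j ∈ range m, q j = ∑ j ∈ range M, if j < m then q j else 0 := by
        rw [← sum_filter]
        congr 1
        ext j
        simp only [mem_range, mem_filter]
        omega
    _ = ∑ j : Fin M, if (j : ℕ) < m then q j else 0 := by
        rw [← Fin.sum_univ_eq_sum_range (fun j => if j < m then q j else 0)]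
        simp only [Fin.cast_val_eq_self]
    _ = psum q m := by rw [psum, sum_filter]

lemma sum_range_add_self (a : ℕ) :
    ∑ j ∈ range (M + a), q j = ∑ i, q i + ∑ j ∈ range a, q j := by
  rw [sum_range_add, sum_range_eq_psum q le_rfl, psum]
  simp

def cycSum (t i : Fin M) : ℤ := ∑ m ∈ range (i - t : Fin M), q (t + m)

def cycRank (t : Fin M) : ℕ := #{i ∈ upSteps q | i ≠ t ∧ cycSum q t i ≤ 0}

lemma cycSum_eq_sub (t i : Fin M) :
    cycSum q t i = ∑ j ∈ range (t + (i - t : Fin M) : ℕ), q j - ∑ j ∈ range t, q j := by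
  simp [sum_range_add, cycSum]

lemma cycSum_of_le {t i : Fin M} (h : t ≤ i) : cycSum q t i = psum q i - psum q t := by
  rw [cycSum_eq_sub, Fin.coe_sub_iff_le.2 h, Nat.add_sub_cancel' h,
    sum_range_eq_psum q i.isLt.le, sum_range_eq_psum q t.isLt.le]

lemma cycSum_of_lt {t i : Fin M} (h : i < t) :
    cycSum q t i = ∑ j, q j + psum q i - psum q t := by
  have hi : (i : ℕ) < t := h
  rw [cycSum_eq_sub, Fin.coe_sub_iff_lt.2 h, show (t : ℕ) + (M + i - t) = M + i by omega,
    sum_range_add_self, sum_range_eq_psum q i.isLt.le, sum_range_eq_psum q t.isLt.le]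

lemma ne_and_cycSum_nonpos_iff (hq : ∑ j, q j = 1) {t i : Fin M} :
    i ≠ t ∧ cycSum q t i ≤ 0 ↔ heightKey q i < heightKey q t := by
  rw [heightKey, heightKey, Prod.Lex.toLex_lt_toLex]
  rcases lt_trichotomy i t with h | rfl | h
  · have hi : (i : ℕ) < t := h
    rw [cycSum_of_lt q h, hq]
    simp only [ne_eq, h.ne, not_false_eq_true, true_and]
    omega
  · simp
  · have hi : (t : ℕ) < i := h
    rw [cycSum_of_le q h.le]
    simp only [ne_eq, h.ne', not_false_eq_true, true_and]
    omega

theorem existsUnique_cycRank_eq (hq : ∑ j, q j = 1) {k : ℕ} (hk : k < #(upSteps q)) :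
    ∃! t ∈ upSteps q, cycRank q t = k := by
  simpa only [cycRank, ne_and_cycSum_nonpos_iff q hq] using
    existsUnique_card_filter_lt_eq (heightKey_injective q).injOn hk

lemma cycSum_rotate (c t i : Fin M) : cycSum (rotate c q) t i = cycSum q (t + c) (i + c) := by
  simp only [cycSum, rotate, add_sub_add_right_eq_sub, add_right_comm]

lemma cycRank_rotate (c t : Fin M) : cycRank (rotate c q) t = cycRank q (t + c) :=
  card_equiv (Equiv.addRight c) fun i => by simp [cycSum_rotate, rotate]

theorem card_mul_card_cycRank_zero_eq (W : Set (Fin M → ℤ)) (hW : ∀ q ∈ W, ∀ c, rotate c q ∈ W)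
    {k : ℕ} (hk : ∀ q ∈ W, ∃! t ∈ upSteps q, cycRank q t = k) :
    M * Nat.card {q // q ∈ W ∧ 0 ∈ upSteps q ∧ cycRank q 0 = k} = Nat.card W := by
  let P := {x : (Fin M → ℤ) × Fin M // x.1 ∈ W ∧ x.2 ∈ upSteps x.1 ∧ cycRank x.1 x.2 = k}
  let rotatePairs : Fin M × {q // q ∈ W ∧ 0 ∈ upSteps q ∧ cycRank q 0 = k} ≃ P :=
    { toFun := fun ⟨c, q, hq⟩ => ⟨(rotate (-c) q, c), hW q hq.1 (-c),
        by rw [mem_upSteps_rotate, add_neg_cancel]; exact hq.2.1,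
        by rw [cycRank_rotate, add_neg_cancel]; exact hq.2.2⟩
      invFun := fun ⟨(q, t), hq⟩ => (t, ⟨rotate t q, hW q hq.1 t,
        by rw [mem_upSteps_rotate, zero_add]; exact hq.2.1,
        by rw [cycRank_rotate, zero_add]; exact hq.2.2⟩)
      left_inv := fun ⟨c, q, hq⟩ => by simp [rotate_rotate, rotate_zero]
      right_inv := fun ⟨(q, t), hq⟩ => by simp [rotate_rotate, rotate_zero] }
  have fst_bijective : Function.Bijective (fun x : P => (⟨x.1.1, x.2.1⟩ : W)) := by
    refine ⟨fun ⟨⟨q, t⟩, hx⟩ ⟨⟨q', t'⟩, hy⟩ hxy => ?_, fun q => ?_⟩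
    · obtain rfl : q = q' := congrArg Subtype.val hxy
      obtain rfl : t = t' := (hk q hx.1).unique hx.2 hy.2
      rfl
    · obtain ⟨t, ht, -⟩ := hk q.1 q.2
      exact ⟨⟨(q.1, t), q.2, ht⟩, rfl⟩
  rw [← Nat.card_eq_of_bijective _ fst_bijective, ← Nat.card_congr rotatePairs, Nat.card_prod,
    Nat.card_eq_fintype_card (α := Fin M), Fintype.card_fin]

end CyclicSequences

section StepSequences

variable {M r u : ℕ}

def stepSeqs (M r u : ℕ) : Set (Fin M → ℤ) :=
  {q | (∀ i, q i = 1 ∨ q i = -r) ∧ #(upSteps q) = u}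

lemma rotate_mem_stepSeqs [NeZero M] {q : Fin M → ℤ} (hq : q ∈ stepSeqs M r u) (c : Fin M) :
    rotate c q ∈ stepSeqs M r u :=
  ⟨fun i => hq.1 (i + c), (card_upSteps_rotate c q).trans hq.2⟩

lemma sum_eq_of_mem_stepSeqs {q : Fin M → ℤ} (hq : q ∈ stepSeqs M r u) :
    ∑ i, q i = u - r * (M - u : ℤ) := by
  have hdowns : (#{i | ¬ q i = 1} : ℤ) = M - u := by
    have := card_filter_add_card_filter_not (s := univ) (fun i => q i = 1)
    rw [← upSteps, hq.2, card_univ, Fintype.card_fin] at this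
    omega
  rw [← sum_filter_add_sum_filter_not univ (fun i => q i = 1),
    sum_congr rfl fun i hi => (mem_filter.1 hi).2,
    sum_congr rfl fun i hi => (hq.1 i).resolve_left (mem_filter.1 hi).2,
    sum_const, sum_const, ← upSteps, hq.2, nsmul_eq_mul, nsmul_eq_mul, hdowns]
  ring

lemma card_stepSeqs : Nat.card (stepSeqs M r u) = M.choose u := by
  have hne : (-r : ℤ) ≠ 1 := by omega
  have upSteps_ite (s : Finset (Fin M)) : upSteps (fun i => if i ∈ s then 1 else -(r : ℤ)) = s := by
    ext i
    by_cases h : i ∈ s <;> simp [h, hne]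
  let upStepsEquiv : stepSeqs M r u ≃ {s : Finset (Fin M) // #s = u} :=
    { toFun := fun q => ⟨upSteps q.1, q.2.2⟩
      invFun := fun s => ⟨fun i => if i ∈ s.1 then 1 else -r,
        fun i => by dsimp only; split_ifs <;> simp, by rw [upSteps_ite]; exact s.2⟩
      left_inv := fun q => Subtype.ext <| funext fun i => by
        rcases q.2.1 i with h | h <;> simp [h, hne]
      right_inv := fun s => Subtype.ext (upSteps_ite s) }
  rw [Nat.card_congr upStepsEquiv, Nat.card_eq_fintype_card, Fintype.card_finset_len,
    Fintype.card_fin]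

end StepSequences

section Prepend

variable {ν : ℕ} (p : Fin ν → ℤ)

lemma psum_cons_succ (a : ℤ) (m : ℕ) :
    psum (Fin.cons a p : Fin (ν + 1) → ℤ) (m + 1) = a + psum p m := by
  simp only [psum, sum_filter, Fin.sum_univ_succ, Fin.cons_zero, Fin.cons_succ, Fin.val_zero,
    Fin.val_succ, Nat.add_lt_add_iff_right, if_pos m.succ_pos]

lemma card_upSteps_cons_one : #(upSteps (Fin.cons 1 p : Fin (ν + 1) → ℤ)) = #(upSteps p) + 1 := by
  simp only [upSteps, card_filter, Fin.sum_univ_succ, Fin.cons_zero, Fin.cons_succ, ↓reduceIte,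
    add_comm]

lemma cycRank_cons_one_zero :
    cycRank (Fin.cons 1 p : Fin (ν + 1) → ℤ) 0 = #{i | p i = 1 ∧ psum p i < 0} := by
  have cycSum_succ (j : Fin ν) :
      cycSum (Fin.cons 1 p : Fin (ν + 1) → ℤ) 0 j.succ = 1 + psum p j := by
    rw [cycSum_of_le _ (Fin.zero_le _), Fin.val_succ, psum_cons_succ, Fin.val_zero]
    simp [psum]
  rw [cycRank, ← card_map (Fin.succEmb ν)]
  congr 1
  ext i
  cases i using Fin.cases with
  | zero => simp
  | succ j =>
    simp only [mem_filter, mem_upSteps, Fin.cons_succ, ne_eq, Fin.succ_ne_zero, not_false_eq_true,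
      true_and, cycSum_succ, mem_map, mem_univ, Fin.coe_succEmb, Fin.succ_inj, exists_eq_right]
    omega

theorem card_paths_eq_card_cons (r u k : ℕ) :
    Nat.card {p : Fin ν → ℤ // (∀ i, p i = 1 ∨ p i = -(r : ℤ)) ∧ #{i | p i = 1} = u ∧
      #{i | p i = 1 ∧ psum p i < 0} = k} =
    Nat.card {q // q ∈ stepSeqs (ν + 1) r (u + 1) ∧ 0 ∈ upSteps q ∧ cycRank q 0 = k} := by
  have cons_mem_iff (p : Fin ν → ℤ) :
      (Fin.cons 1 p ∈ stepSeqs (ν + 1) r (u + 1) ∧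
          cycRank (Fin.cons 1 p : Fin (ν + 1) → ℤ) 0 = k) ↔
        (∀ i, p i = 1 ∨ p i = -(r : ℤ)) ∧ #{i | p i = 1} = u ∧
          #{i | p i = 1 ∧ psum p i < 0} = k := by
    rw [cycRank_cons_one_zero]
    simp only [stepSeqs, Set.mem_ofPred_eq, Fin.forall_fin_succ, Fin.cons_zero, Fin.cons_succ,
      true_or, true_and, card_upSteps_cons_one, add_left_inj, and_assoc]
    rfl
  have cons_tail (q : Fin (ν + 1) → ℤ) (hq : 0 ∈ upSteps q) : Fin.cons 1 (Fin.tail q) = q := by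
    rw [← mem_upSteps.1 hq, Fin.cons_self_tail]
  exact Nat.card_congr
    { toFun := fun p => ⟨Fin.cons 1 p.1, ((cons_mem_iff p.1).2 p.2).1, by simp,
        ((cons_mem_iff p.1).2 p.2).2⟩
      invFun := fun q => ⟨Fin.tail q.1, (cons_mem_iff _).1 <| by
        rw [cons_tail q.1 q.2.2.1]; exact ⟨q.2.1, q.2.2.2⟩⟩
      left_inv := fun p => Subtype.ext (Fin.tail_cons (α := fun _ => ℤ) 1 p.1)
      right_inv := fun q => Subtype.ext (cons_tail q.1 q.2.2.1) }

end Prepend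

theorem generalized_catalan_chung_feller_classical_general (r n : ℕ)
    (k : ℕ) (hk : k ≤ r*n) :
    Nat.card {p : Fin ((r+1)*n) → ℤ //
      (∀ i, p i = 1 ∨ p i = -(r : ℤ)) ∧
      (univ.filter (fun i => p i = 1)).card = r*n ∧
      (univ.filter (fun i : Fin ((r+1)*n) => p i = 1 ∧ psum p (i : ℕ) < 0)).card = k }
      * (r*n + 1) = Nat.choose ((r+1)*n) n := by
  have cycle_lemma (q) (hq : q ∈ stepSeqs ((r+1)*n + 1) r (r*n + 1)) :
      ∃! t ∈ upSteps q, cycRank q t = k := by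
    refine existsUnique_cycRank_eq q ?_ (by rw [hq.2]; omega)
    rw [sum_eq_of_mem_stepSeqs hq]
    push_cast
    ring
  have hcount := card_mul_card_cycRank_zero_eq _ (fun _ hq c => rotate_mem_stepSeqs hq c)
    cycle_lemma
  rw [card_stepSeqs] at hcount
  rw [card_paths_eq_card_cons]
  apply Nat.eq_of_mul_eq_mul_left ((r+1)*n).succ_pos
  calc ((r+1)*n + 1) * (_ * (r*n + 1)) = ((r+1)*n + 1).choose (r*n + 1) * (r*n + 1) := by
        rw [← mul_assoc, hcount]
    _ = ((r+1)*n + 1) * ((r+1)*n).choose (r*n) := (Nat.add_one_mul_choose_eq _ _).symm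
    _ = ((r+1)*n + 1) * ((r+1)*n).choose n := by
        rw [Nat.choose_symm_of_eq_add (a := r*n) (b := n) (by ring)]

/-- Among paths in 𝒫(n,r,0) (steps +1 or −r, with rn up steps and n down steps),
for each `0 ≤ k ≤ rn` the number with exactly `k` up steps starting strictly below
the x-axis is `(1/(rn+1))·C((r+1)n,n)`; in particular this count is independent of `k`. -/
theorem generalized_catalan_chung_feller_classical (r n : ℕ) (hr : 1 ≤ r) (hn : 1 ≤ n)
    (k : ℕ) (hk : k ≤ r*n) :
    Nat.card {p : Fin ((r+1)*n) → ℤ //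
      (∀ i, p i = 1 ∨ p i = -(r : ℤ)) ∧
      (univ.filter (fun i => p i = 1)).card = r*n ∧
      (univ.filter (fun i : Fin ((r+1)*n) => p i = 1 ∧ psum p (i : ℕ) < 0)).card = k }
      * (r*n + 1) = Nat.choose ((r+1)*n) n :=
  generalized_catalan_chung_feller_classical_general r n k hk
end
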